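/- Let M be a planar hypermap and l₁ = (x,b) :: (x',b') :: l a list of at least two double-links satisfying the ring continuity condition (consecutive faces adjacent, pre_ring1) and the simplicity condition (all faces distinct, pre_ring3). Let y = α₀(x) and x₀ = bottom of the 0-orbit of x. Then y and x₀ do not lie in the same face of M. -/

import Mathlib

open scoped Classical

/-- Dimensions 0 and 1. -/
inductive Dim : Type
  | zero : Dim
  | one : Dim
deriving DecidableEq

/-- Free maps: empty map, dart insertion, dart linking at a dimension. -/
inductive Fmap : Type
  | V : Fmap
  | I : Fmap → Nat → Fmap
  | L : Fmap → Dim → Nat → Nat → Fmap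

namespace Fmap

/-- The nil (exception) dart. -/
def nil : Nat := 0

/-- A dart exists in the map. -/
def exd : Fmap → Nat → Prop
  | V, _ => False
  | I m0 x, z => z = x ∨ exd m0 z
  | L m0 _ _ _, z => exd m0 z

/-- The (partial) k-successor α_k, with nil for undefined. -/
def A : Fmap → Dim → Nat → Nat
  | V, _, _ => nil
  | I m0 _, k, z => A m0 k z
  | L m0 k0 x y, k, z =>
      if k = k0 then (if z = x then y else A m0 k z) else A m0 k z

/-- The (partial) k-predecessor. -/
def A_1 : Fmap → Dim → Nat → Nat
  | V, _, _ => nil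
  | I m0 _, k, z => A_1 m0 k z
  | L m0 k0 x y, k, z =>
      if k = k0 then (if z = y then x else A_1 m0 k z) else A_1 m0 k z

/-- z has a k-successor. -/
def succd (m : Fmap) (k : Dim) (z : Nat) : Prop := A m k z ≠ nil

/-- z has a k-predecessor. -/
def predd (m : Fmap) (k : Dim) (z : Nat) : Prop := A_1 m k z ≠ nil

/-- Bottom dart of the open k-orbit of z. -/
def bottom : Fmap → Dim → Nat → Nat
  | V, _, _ => nil
  | I m0 x, k, z => if z = x then z else bottom m0 k z
  | L m0 k0 x y, k, z =>
      if k = k0 then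
        (if bottom m0 k z = y then bottom m0 k x else bottom m0 k z)
      else bottom m0 k z

/-- Top dart of the open k-orbit of z. -/
def top : Fmap → Dim → Nat → Nat
  | V, _, _ => nil
  | I m0 x, k, z => if z = x then z else top m0 k z
  | L m0 k0 x y, k, z =>
      if k = k0 then
        (if top m0 k z = x then top m0 k y else top m0 k z)
      else top m0 k z

/-- Closure of A: a permutation of existing darts. -/
def cA : Fmap → Dim → Nat → Nat
  | V, _, _ => nil
  | I m0 x, k, z => if z = x then z else cA m0 k z
  | L m0 k0 x y, k, z =>
      if k = k0 then
        (if z = x then y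
         else if z = top m0 k y then bottom m0 k x
         else cA m0 k z)
      else cA m0 k z

/-- Closure of A_1: the inverse permutation of cA. -/
def cA_1 : Fmap → Dim → Nat → Nat
  | V, _, _ => nil
  | I m0 x, k, z => if z = x then z else cA_1 m0 k z
  | L m0 k0 x y, k, z =>
      if k = k0 then
        (if z = y then x
         else if z = bottom m0 k x then top m0 k y
         else cA_1 m0 k z)
      else cA_1 m0 k z

/-- Precondition for inserting a dart. -/
def prec_I (m : Fmap) (x : Nat) : Prop := x ≠ nil ∧ ¬ exd m x

/-- Precondition for linking two darts at a dimension (keeping orbits open). -/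
def prec_L (m : Fmap) (k : Dim) (x y : Nat) : Prop :=
  exd m x ∧ exd m y ∧ ¬ succd m k x ∧ ¬ predd m k y ∧ cA m k x ≠ y

/-- The hypermap invariant. -/
def inv_hmap : Fmap → Prop
  | V => True
  | I m0 x => inv_hmap m0 ∧ prec_I m0 x
  | L m0 k0 x y => inv_hmap m0 ∧ prec_L m0 k0 x y

/-- The closed face map cF, corresponding to φ = α₁⁻¹ ∘ α₀⁻¹. -/
def cF (m : Fmap) (z : Nat) : Nat := cA_1 m Dim.one (cA_1 m Dim.zero z)

/-- Two darts are in the same face (existence of a cF-path). -/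
def expf (m : Fmap) (z t : Nat) : Prop := exd m z ∧ ∃ n : ℕ, (cF m)^[n] z = t

/-- Two darts are in the same edge (existence of a (cA zero)-path). -/
def expe (m : Fmap) (z t : Nat) : Prop := exd m z ∧ ∃ n : ℕ, (fun w => cA m Dim.zero w)^[n] z = t

/-- Two darts are in the same connected component. -/
def eqc : Fmap → Nat → Nat → Prop
  | V, _, _ => False
  | I m0 x, z, t => (z = x ∧ t = x) ∨ eqc m0 z t
  | L m0 _ x y, z, t =>
      eqc m0 z t ∨ (eqc m0 z x ∧ eqc m0 y t) ∨ (eqc m0 z y ∧ eqc m0 x t)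

/-- Number of darts. -/
def nd : Fmap → ℤ
  | V => 0
  | I m0 _ => nd m0 + 1
  | L m0 _ _ _ => nd m0

/-- Number of vertices. -/
def nv : Fmap → ℤ
  | V => 0
  | I m0 _ => nv m0 + 1
  | L m0 Dim.zero _ _ => nv m0
  | L m0 Dim.one _ _ => nv m0 - 1

/-- Number of edges. -/
def ne : Fmap → ℤ
  | V => 0
  | I m0 _ => ne m0 + 1
  | L m0 Dim.zero _ _ => ne m0 - 1
  | L m0 Dim.one _ _ => ne m0

/-- Number of faces. -/
noncomputable def nf : Fmap → ℤ
  | V => 0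
  | I m0 _ => nf m0 + 1
  | L m0 Dim.zero x y => if expf m0 (cA_1 m0 Dim.one x) y then nf m0 + 1 else nf m0 - 1
  | L m0 Dim.one x y => if expf m0 x (cA m0 Dim.zero y) then nf m0 + 1 else nf m0 - 1

/-- Number of connected components. -/
noncomputable def nc : Fmap → ℤ
  | V => 0
  | I m0 _ => nc m0 + 1
  | L m0 _ x y => if eqc m0 x y then nc m0 else nc m0 - 1

/-- Euler characteristic. -/
noncomputable def ec (m : Fmap) : ℤ := nv m + ne m + nf m - nd m

/-- Genus. -/
noncomputable def genus (m : Fmap) : ℤ := nc m - ec m / 2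

/-- Planarity. -/
def planar (m : Fmap) : Prop := genus m = 0

/-- Breaking the latest forward k-link of x. -/
def B : Fmap → Dim → Nat → Fmap
  | V, _, _ => V
  | I m0 x0, k, x => I (B m0 k x) x0
  | L m0 k0 x0 y0, k, x =>
      if k = k0 ∧ x = x0 then m0 else L (B m0 k x) k0 x0 y0

/-- Breaking all the 0-links of the darts of a list, first one first. -/
def Bl (m : Fmap) : List (Nat × Bool) → Fmap
  | [] => m
  | (x, _) :: l0 => Bl (B m Dim.zero x) l0

/-- The dart representing the face coded by a double-link (x, b). -/
def faceDart (m : Fmap) : Nat × Bool → Nat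
  | (x, b) => if b then A m Dim.zero x else bottom m Dim.zero x

/-- The edge of x is distinct from the edges of the darts of a list. -/
def distinct_edge_list (m : Fmap) (x : Nat) : List (Nat × Bool) → Prop
  | [] => True
  | (x', _) :: l0 => distinct_edge_list m x l0 ∧ ¬ expe m x x'

/-- Ring condition (0): unicity of edges, and each dart 0-linked. -/
def pre_ring0 (m : Fmap) : List (Nat × Bool) → Prop
  | [] => True
  | (x, _) :: l0 => pre_ring0 m l0 ∧ distinct_edge_list m x l0 ∧ succd m Dim.zero x

/-- Adjacency of the faces coded by two double-links. -/
def adjacent_faces (m : Fmap) : Nat × Bool → Nat × Bool → Prop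
  | (x, b), (x', b') =>
      let y := A m Dim.zero x
      let y' := A m Dim.zero x'
      let x0 := bottom m Dim.zero x
      let x'0 := bottom m Dim.zero x'
      if b then (if b' then expf m x0 y' else expf m x0 x'0)
      else (if b' then expf m y y' else expf m y x'0)

/-- Ring condition (1): continuity. -/
def pre_ring1 (m : Fmap) : List (Nat × Bool) → Prop
  | [] => True
  | xb :: l0 =>
      pre_ring1 m l0 ∧
      match l0 with
      | [] => True
      | xb' :: _ => adjacent_faces m xb xb'

/-- Last element of a list of double-links (with default). -/
def lastd : List (Nat × Bool) → Nat × Bool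
  | [] => (nil, true)
  | [a] => a
  | _ :: a :: l0 => lastd (a :: l0)

/-- Ring condition (2): circularity. -/
def pre_ring2 (m : Fmap) : List (Nat × Bool) → Prop
  | [] => True
  | (x, b) :: l0 =>
      match l0 with
      | [] => expf m (A m Dim.zero x) (bottom m Dim.zero x)
      | _ :: _ => adjacent_faces m (lastd l0) (x, b)

/-- The faces coded by two double-links are distinct. -/
def distinct_faces (m : Fmap) (xb xb' : Nat × Bool) : Prop :=
  ¬ expf m (faceDart m xb) (faceDart m xb')

/-- The face of xb is distinct from the faces of a list. -/
def distinct_face_list (m : Fmap) (xb : Nat × Bool) : List (Nat × Bool) → Prop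
  | [] => True
  | xb' :: l0 => distinct_face_list m xb l0 ∧ distinct_faces m xb xb'

/-- Ring condition (3): simplicity. -/
def pre_ring3 (m : Fmap) : List (Nat × Bool) → Prop
  | [] => True
  | xb :: l0 => pre_ring3 m l0 ∧ distinct_face_list m xb l0

/-- A ring of faces. -/
def ring (m : Fmap) (l : List (Nat × Bool)) : Prop :=
  l ≠ [] ∧ pre_ring0 m l ∧ pre_ring1 m l ∧ pre_ring2 m l ∧ pre_ring3 m l

end Fmap

/-! The face coded by `(x, b)` is represented by `y` or `x₀` according to `b`, and continuity puts
the other one of these two darts in the face of `(x', b')`. If `y` and `x₀` shared a face, the faces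
of `(x, b)` and `(x', b')` would coincide, against simplicity. For `b = false` this needs the
face relation to be symmetric, which holds because `cF` permutes the finitely many darts. -/

theorem Set.Finite.mem_periodicPts_of_injOn {α : Type*} {f : α → α} {s : Set α}
    (hs : s.Finite) (hf : Set.MapsTo f s s) (hinj : Set.InjOn f s) {x : α} (hx : x ∈ s) :
    x ∈ Function.periodicPts f := by
  have : Finite s := hs.to_subtype
  obtain ⟨n, hn, hper⟩ := ((hf.restrict_inj).2 hinj).mem_periodicPts ⟨x, hx⟩
  refine ⟨n, hn, congrArg Subtype.val (?_ : (hf.iterate n).restrict _ _ _ ⟨x, hx⟩ = ⟨x, hx⟩)⟩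
  rw [← hf.iterate_restrict]
  exact hper

theorem Function.exists_iterate_eq_of_mem_periodicPts {α : Type*} {f : α → α} {x : α}
    (hx : x ∈ Function.periodicPts f) (n : ℕ) : ∃ k, f^[k] (f^[n] x) = x := by
  obtain ⟨p, hp, hper⟩ := hx
  refine ⟨p * n - n, ?_⟩
  rw [← Function.iterate_add_apply, Nat.sub_add_cancel (Nat.le_mul_of_pos_left n hp)]
  exact (hper.mul_const n).eq

namespace Fmap

theorem ne_nil_of_exd {m : Fmap} (h : inv_hmap m) {z : Nat} (hz : exd m z) : z ≠ nil := by
  induction m with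
  | V => exact hz.elim
  | I m0 x ih => rcases hz with rfl | hz; exacts [h.2.1, ih h.1 hz]
  | L m0 k0 x y ih => exact ih h.1 hz

theorem exd_bottom {m : Fmap} (h : inv_hmap m) (k : Dim) {z : Nat} (hz : exd m z) :
    exd m (bottom m k z) := by
  induction m generalizing z with
  | V => exact hz.elim
  | I m0 x ih =>
    simp only [bottom]
    split_ifs with hzx
    · exact Or.inl hzx
    · exact Or.inr (ih h.1 (hz.resolve_left hzx))
  | L m0 k0 x y ih =>
    simp only [bottom]
    split_ifs
    exacts [ih h.1 h.2.1, ih h.1 hz, ih h.1 hz]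

theorem exd_top {m : Fmap} (h : inv_hmap m) (k : Dim) {z : Nat} (hz : exd m z) :
    exd m (top m k z) := by
  induction m generalizing z with
  | V => exact hz.elim
  | I m0 x ih =>
    simp only [top]
    split_ifs with hzx
    · exact Or.inl hzx
    · exact Or.inr (ih h.1 (hz.resolve_left hzx))
  | L m0 k0 x y ih =>
    simp only [top]
    split_ifs
    exacts [ih h.1 h.2.2.1, ih h.1 hz, ih h.1 hz]

theorem bottom_eq_self {m : Fmap} (h : inv_hmap m) (k : Dim) {z : Nat} (hz : exd m z)
    (hp : ¬ predd m k z) : bottom m k z = z := by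
  induction m generalizing z with
  | V => exact hz.elim
  | I m0 x ih =>
    simp only [bottom]
    split_ifs with hzx
    · rfl
    · exact ih h.1 (hz.resolve_left hzx) hp
  | L m0 k0 x y ih =>
    simp only [predd, A_1] at hp
    simp only [bottom]
    split_ifs at hp ⊢ with hk hbz hzy hzy
    · exact absurd (ne_nil_of_exd h.1 h.2.1) hp
    · exact absurd ((ih h.1 hz hp).symm.trans hbz) hzy
    · exact absurd (ne_nil_of_exd h.1 h.2.1) hp
    all_goals exact ih h.1 hz hp

theorem top_eq_self {m : Fmap} (h : inv_hmap m) (k : Dim) {z : Nat} (hz : exd m z)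
    (hs : ¬ succd m k z) : top m k z = z := by
  induction m generalizing z with
  | V => exact hz.elim
  | I m0 x ih =>
    simp only [top]
    split_ifs with hzx
    · rfl
    · exact ih h.1 (hz.resolve_left hzx) hs
  | L m0 k0 x y ih =>
    simp only [succd, A] at hs
    simp only [top]
    split_ifs at hs ⊢ with hk htz hzx hzx
    · exact absurd (ne_nil_of_exd h.1 h.2.2.1) hs
    · exact absurd ((ih h.1 hz hs).symm.trans htz) hzx
    · exact absurd (ne_nil_of_exd h.1 h.2.2.1) hs
    all_goals exact ih h.1 hz hs

theorem bottom_top {m : Fmap} (h : inv_hmap m) (k : Dim) {z : Nat} (hz : exd m z) :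
    bottom m k (top m k z) = bottom m k z := by
  induction m generalizing z with
  | V => exact hz.elim
  | I m0 x ih =>
    by_cases hzx : z = x
    · simp [top, bottom, hzx]
    have hz0 : exd m0 z := hz.resolve_left hzx
    have htx : top m0 k z ≠ x := fun e => h.2.2 (e ▸ exd_top h.1 k hz0)
    simp only [top, bottom, if_neg hzx, if_neg htx]
    exact ih h.1 hz0
  | L m0 k0 x y ih =>
    obtain ⟨h0, -, hy, -, hpy, -⟩ := h
    by_cases hk : k = k0
    · subst hk
      simp only [top, bottom, if_true]
      by_cases htz : top m0 k z = x
      · have hbz : bottom m0 k z = bottom m0 k x := by rw [← ih h0 hz, htz]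
        rw [if_pos htz, ih h0 hy, bottom_eq_self h0 k hy hpy, hbz]
        simp
      · rw [if_neg htz, ih h0 hz]
    · simp only [top, bottom, if_neg hk]
      exact ih h0 hz

theorem top_bottom {m : Fmap} (h : inv_hmap m) (k : Dim) {z : Nat} (hz : exd m z) :
    top m k (bottom m k z) = top m k z := by
  induction m generalizing z with
  | V => exact hz.elim
  | I m0 x ih =>
    by_cases hzx : z = x
    · simp [top, bottom, hzx]
    have hz0 : exd m0 z := hz.resolve_left hzx
    have hbx : bottom m0 k z ≠ x := fun e => h.2.2 (e ▸ exd_bottom h.1 k hz0)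
    simp only [top, bottom, if_neg hzx, if_neg hbx]
    exact ih h.1 hz0
  | L m0 k0 x y ih =>
    obtain ⟨h0, hx, -, hsx, -, -⟩ := h
    by_cases hk : k = k0
    · subst hk
      simp only [top, bottom, if_true]
      by_cases hbz : bottom m0 k z = y
      · have htz : top m0 k z = top m0 k y := by rw [← ih h0 hz, hbz]
        rw [if_pos hbz, ih h0 hx, top_eq_self h0 k hx hsx, htz]
        simp
      · rw [if_neg hbz, ih h0 hz]
    · simp only [top, bottom, if_neg hk]
      exact ih h0 hz

theorem cA_top {m : Fmap} (h : inv_hmap m) (k : Dim) {z : Nat} (hz : exd m z) :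
    cA m k (top m k z) = bottom m k z := by
  induction m generalizing z with
  | V => exact hz.elim
  | I m0 x ih =>
    by_cases hzx : z = x
    · simp [top, bottom, cA, hzx]
    have hz0 : exd m0 z := hz.resolve_left hzx
    have htx : top m0 k z ≠ x := fun e => h.2.2 (e ▸ exd_top h.1 k hz0)
    simp only [top, bottom, cA, if_neg hzx, if_neg htx]
    exact ih h.1 hz0
  | L m0 k0 x y ih =>
    obtain ⟨h0, -, hy, -, hpy, hxy⟩ := h
    by_cases hk : k = k0
    · subst hk
      simp only [top, bottom, cA, if_true]
      by_cases htz : top m0 k z = x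
      · have hbz : bottom m0 k z = bottom m0 k x := by rw [← bottom_top h0 k hz, htz]
        have hty : top m0 k y ≠ x := by
          intro e
          have hbx : bottom m0 k x = y := by
            rw [← e, bottom_top h0 k hy, bottom_eq_self h0 k hy hpy]
          exact hxy (by rw [← htz, ih h0 hz, hbz, hbx])
        rw [if_pos htz, if_neg hty, hbz]
        simp
      · rw [if_neg htz]
        by_cases hty : top m0 k z = top m0 k y
        · have hbz : bottom m0 k z = y := by
            rw [← bottom_top h0 k hz, hty, bottom_top h0 k hy, bottom_eq_self h0 k hy hpy]
          rw [if_neg htz, if_pos hty, if_pos hbz]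
        · have hbz : bottom m0 k z ≠ y := fun e => hty (by rw [← top_bottom h0 k hz, e])
          rw [if_neg htz, if_neg hty, if_neg hbz, ih h0 hz]
    · simp only [top, bottom, cA, if_neg hk]
      exact ih h0 hz

theorem exd_cA_1 {m : Fmap} (h : inv_hmap m) (k : Dim) {z : Nat} (hz : exd m z) :
    exd m (cA_1 m k z) := by
  induction m generalizing z with
  | V => exact hz.elim
  | I m0 x ih =>
    simp only [cA_1]
    split_ifs with hzx
    · exact Or.inl hzx
    · exact Or.inr (ih h.1 (hz.resolve_left hzx))
  | L m0 k0 x y ih =>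
    simp only [cA_1]
    split_ifs
    exacts [h.2.1, exd_top h.1 k h.2.2.1, ih h.1 hz, ih h.1 hz]

theorem cA_cA_1 {m : Fmap} (h : inv_hmap m) (k : Dim) {z : Nat} (hz : exd m z) :
    cA m k (cA_1 m k z) = z := by
  induction m generalizing z with
  | V => exact hz.elim
  | I m0 x ih =>
    by_cases hzx : z = x
    · simp [cA, cA_1, hzx]
    have hz0 : exd m0 z := hz.resolve_left hzx
    have hcx : cA_1 m0 k z ≠ x := fun e => h.2.2 (e ▸ exd_cA_1 h.1 k hz0)
    simp only [cA, cA_1, if_neg hzx, if_neg hcx]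
    exact ih h.1 hz0
  | L m0 k0 x y ih =>
    obtain ⟨h0, hx, hy, hsx, hpy, -⟩ := h
    by_cases hk : k = k0
    · subst hk
      have hbx : cA m0 k x = bottom m0 k x := by
        rw [← cA_top h0 k hx, top_eq_self h0 k hx hsx]
      have hby : cA m0 k (top m0 k y) = y := by
        rw [cA_top h0 k hy, bottom_eq_self h0 k hy hpy]
      simp only [cA, cA_1, if_true]
      by_cases hzy : z = y
      · simp [hzy]
      rw [if_neg hzy]
      by_cases hzb : z = bottom m0 k x
      · have hty : top m0 k y ≠ x := fun e => hzy (by rw [hzb, ← hbx, ← e, hby])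
        rw [if_pos hzb, if_neg hty, if_pos rfl, hzb]
      · have hcx : cA_1 m0 k z ≠ x := fun e => hzb (by rw [← hbx, ← e, ih h0 hz])
        have hcy : cA_1 m0 k z ≠ top m0 k y := fun e => hzy (by rw [← hby, ← e, ih h0 hz])
        rw [if_neg hzb, if_neg hcx, if_neg hcy, ih h0 hz]
    · simp only [cA, cA_1, if_neg hk]
      exact ih h0 hz

theorem mapsTo_cF {m : Fmap} (h : inv_hmap m) : Set.MapsTo (cF m) {z | exd m z} {z | exd m z} :=
  fun _ hz => exd_cA_1 h Dim.one (exd_cA_1 h Dim.zero hz)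

theorem cF_injOn {m : Fmap} (h : inv_hmap m) : Set.InjOn (cF m) {z | exd m z} := by
  have hcancel : ∀ z, exd m z → cA m Dim.zero (cA m Dim.one (cF m z)) = z := fun z hz => by
    rw [cF, cA_cA_1 h Dim.one (exd_cA_1 h Dim.zero hz), cA_cA_1 h Dim.zero hz]
  intro u hu v hv huv
  rw [← hcancel u hu, ← hcancel v hv, huv]

theorem finite_setOf_exd (m : Fmap) : {z | exd m z}.Finite := by
  induction m with
  | V => exact Set.finite_empty
  | I m0 x ih => exact ih.insert x
  | L m0 k0 x y ih => exact ih

theorem mem_periodicPts_cF {m : Fmap} (h : inv_hmap m) {z : Nat} (hz : exd m z) :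
    z ∈ Function.periodicPts (cF m) :=
  (finite_setOf_exd m).mem_periodicPts_of_injOn (mapsTo_cF h) (cF_injOn h) hz

theorem expf_symm {m : Fmap} (h : inv_hmap m) {z t : Nat} (hzt : expf m z t) : expf m t z := by
  obtain ⟨hz, n, rfl⟩ := hzt
  obtain ⟨k, hk⟩ := Function.exists_iterate_eq_of_mem_periodicPts (mem_periodicPts_cF h hz) n
  exact ⟨(mapsTo_cF h).iterate n hz, k, hk⟩

theorem expf_trans {m : Fmap} {z t u : Nat} (hzt : expf m z t) (htu : expf m t u) :
    expf m z u := by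
  obtain ⟨hz, n, rfl⟩ := hzt
  obtain ⟨-, p, rfl⟩ := htu
  exact ⟨hz, p + n, Function.iterate_add_apply _ _ _ _⟩

theorem adjacent_faces_iff (m : Fmap) (x : Nat) (b : Bool) (xb' : Nat × Bool) :
    adjacent_faces m (x, b) xb' ↔ expf m (faceDart m (x, !b)) (faceDart m xb') := by
  obtain ⟨x', b'⟩ := xb'
  cases b <;> cases b' <;> rfl

end Fmap

open Fmap

theorem ring1_ring3_connect_general (m : Fmap) (x x' : Nat) (b b' : Bool)
    (l : List (Nat × Bool)) (h1 : inv_hmap m)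
    (h3 : pre_ring1 m ((x, b) :: (x', b') :: l))
    (h4 : pre_ring3 m ((x, b) :: (x', b') :: l)) :
    ¬ expf m (A m Dim.zero x) (bottom m Dim.zero x) := by
  intro hface
  have hsame : expf m (faceDart m (x, b)) (faceDart m (x, !b)) := by
    cases b
    exacts [expf_symm h1 hface, hface]
  exact h4.2.2 (expf_trans hsame ((adjacent_faces_iff m x b _).1 h3.2))

/-- With at least two ring elements, continuity and simplicity force
y and x₀ to lie in distinct faces. -/
theorem ring1_ring3_connect (m : Fmap) (x x' : Nat) (b b' : Bool)
    (l : List (Nat × Bool)) (h1 : inv_hmap m) (h2 : planar m)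
    (h3 : pre_ring1 m ((x, b) :: (x', b') :: l))
    (h4 : pre_ring3 m ((x, b) :: (x', b') :: l)) :
    ¬ expf m (A m Dim.zero x) (bottom m Dim.zero x) :=
  ring1_ring3_connect_general m x x' b b' l h1 h3 h4
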